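/- arXiv:2508.18068 — 5 statements merged into one kernel-verified Lean document; each statement's English description precedes it below -/
import Mathlib

section
/- Let p be an odd prime with p ≡ 3 (mod 4) and s a positive integer. The quadratic unitary Cayley graph G_{p^s} has eigenvalues λ_a = χ_a(Q_{p^s}) + conj(χ_a(Q_{p^s})) for a ∈ Z_{p^s}, and these satisfy: λ_a = p^{s-1}(p-1) if a = 0; λ_a = -p^{s-1} if a is a nonzero multiple of p^{s-1}; and λ_a = 0 otherwise. In particular, every eigenvalue of G_{p^s} is an integer. -/
/-!
Since `p ≡ 3 (mod 4)`, `-1` is not a square modulo `p`, hence not modulo `p ^ s`. In the local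
ring `ZMod (p ^ s)`, where `2` is a unit, `u ^ 2 = v ^ 2` forces `u = ± v`, so the squares of
units make up half of the units and the units split as `Q ⊔ -Q`. As `conj (χ_a(Q)) = χ_a(-Q)`,
`λ_a` is the Ramanujan sum `∑_{u unit} ψ(a u)`: the full character sum `p ^ s [a = 0]` minus the
sum over the maximal ideal `(p)`, which is `|(p)| = p ^ (s - 1)` when `a` kills `(p)` and `0`
otherwise.
-/

open Finset

open Classical in
theorem AddChar.sum_filter_mem_addSubgroup {G R : Type*} [AddGroup G] [Fintype G] [CommRing R]
    [IsDomain R] (ψ : AddChar G R) (H : AddSubgroup G) [DecidablePred (· ∈ H)] :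
    ∑ x ∈ univ.filter (· ∈ H), ψ x =
      if ∀ x ∈ H, ψ x = 1 then (Nat.card H : R) else 0 := by
  rw [Finset.sum_subtype _ (fun _ => mem_filter_univ _), Nat.card_eq_fintype_card]
  convert (ψ.compAddMonoidHom H.subtype).sum_eq_ite using 2
  · rfl
  · rw [AddChar.ext_iff]
    simp

open Classical in
theorem AddChar.sum_mul_mem_ideal {R R' : Type*} [CommRing R] [Fintype R] [CommRing R']
    [IsDomain R'] {ψ : AddChar R R'} (hψ : ψ.IsPrimitive) (I : Ideal R)
    [DecidablePred (· ∈ I)] (a : R) :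
    ∑ b ∈ univ.filter (· ∈ I), ψ (a * b) =
      if ∀ m ∈ I, a * m = 0 then (Nat.card I : R') else 0 := by
  have key := (ψ.mulShift a).sum_filter_mem_addSubgroup I.toAddSubgroup
  simp only [AddChar.mulShift_apply, Submodule.mem_toAddSubgroup] at key
  rw [key]
  congr 1
  refine propext ⟨fun h m hm => ?_, fun h m hm => by rw [h m hm, AddChar.map_zero_eq_one]⟩
  by_contra ham
  refine hψ ham (AddChar.ext _ _ fun r => ?_)
  simpa [mul_assoc] using h (m * r) (I.mul_mem_right r hm)

theorem IsLocalRing.eq_or_eq_neg_of_sq_eq_sq {R : Type*} [CommRing R] [IsLocalRing R]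
    (h2 : IsUnit (2 : R)) {x y : R} (hx : IsUnit x) (h : x ^ 2 = y ^ 2) : x = y ∨ x = -y := by
  have hprod : (x - y) * (x + y) = 0 := by linear_combination h
  have hsum : IsUnit ((x - y) + (x + y)) := by
    rw [show (x - y) + (x + y) = 2 * x by ring]
    exact h2.mul hx
  rcases IsLocalRing.isUnit_or_isUnit_of_isUnit_add hsum with hu | hu
  · right
    linear_combination hu.mul_right_eq_zero.mp hprod
  · left
    linear_combination hu.mul_left_eq_zero.mp hprod

section UnitSquares

variable (R : Type*) [CommRing R] [Fintype R] [DecidableEq R]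

def unitSquares : Finset R := univ.image fun u : Rˣ => (u : R) ^ 2

variable {R}

theorem image_val_units_eq_filter_isUnit [DecidablePred (IsUnit : R → Prop)] :
    univ.image (Units.val : Rˣ → R) = univ.filter IsUnit := by
  ext x
  simp [IsUnit]

theorem disjoint_unitSquares_image_neg (h1 : ¬IsSquare (-1 : R)) :
    Disjoint (unitSquares R) ((unitSquares R).image Neg.neg) := by
  simp only [unitSquares, disjoint_left, mem_image, mem_univ, true_and]
  rintro _ ⟨u, rfl⟩ ⟨_, ⟨v, rfl⟩, hvu⟩
  refine h1 ⟨(u * v⁻¹ : Rˣ), ?_⟩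
  calc (-1 : R) = -((v * v⁻¹ : Rˣ) : R) ^ 2 := by simp
    _ = ((u * v⁻¹ : Rˣ) : R) * ((u * v⁻¹ : Rˣ) : R) := by
      simp only [Units.val_mul]
      linear_combination ((v⁻¹ : Rˣ) : R) ^ 2 * hvu

variable [IsLocalRing R] [DecidablePred (IsUnit : R → Prop)]

theorem card_filter_isUnit_le_two_mul_card_unitSquares (h2 : IsUnit (2 : R)) :
    #(univ.filter (IsUnit : R → Prop)) ≤ 2 * #(unitSquares R) := by
  have hsq : unitSquares R = (univ.filter IsUnit).image fun x : R => x ^ 2 := by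
    rw [← image_val_units_eq_filter_isUnit, image_image]
    rfl
  rw [hsq]
  refine card_le_mul_card_image _ 2 fun y hy => ?_
  obtain ⟨x, hx, rfl⟩ := mem_image.mp hy
  calc #((univ.filter IsUnit).filter (· ^ 2 = x ^ 2)) ≤ #{x, -x} := by
        refine card_le_card fun z hz => ?_
        simp only [mem_filter, mem_univ, true_and] at hz
        simpa using IsLocalRing.eq_or_eq_neg_of_sq_eq_sq h2 hz.1 hz.2
    _ ≤ 2 := card_le_two

theorem unitSquares_union_image_neg (h2 : IsUnit (2 : R)) (h1 : ¬IsSquare (-1 : R)) :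
    unitSquares R ∪ (unitSquares R).image Neg.neg = univ.filter IsUnit := by
  refine eq_of_subset_of_card_le ?_ ?_
  · refine union_subset (fun x hx => ?_) (fun x hx => ?_) <;>
      simp only [unitSquares, mem_image, mem_univ, true_and, mem_filter] at hx ⊢
    · obtain ⟨u, rfl⟩ := hx
      exact u.isUnit.pow 2
    · obtain ⟨_, ⟨u, rfl⟩, rfl⟩ := hx
      exact (u.isUnit.pow 2).neg
  · rw [card_union_of_disjoint (disjoint_unitSquares_image_neg h1),
      card_image_of_injective _ neg_injective]
    linarith [card_filter_isUnit_le_two_mul_card_unitSquares h2]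

theorem sum_filter_isUnit_eq_sum_unitSquares {M : Type*} [AddCommMonoid M]
    (h2 : IsUnit (2 : R)) (h1 : ¬IsSquare (-1 : R)) (f : R → M) :
    ∑ b ∈ univ.filter IsUnit, f b = ∑ b ∈ unitSquares R, f b + ∑ b ∈ unitSquares R, f (-b) := by
  rw [← unitSquares_union_image_neg h2 h1, sum_union (disjoint_unitSquares_image_neg h1),
    sum_image fun _ _ _ _ h => neg_injective h]

end UnitSquares

namespace ZMod

theorem natCast_dvd_natCast_iff {d n k : ℕ} (h : d ∣ n) :
    (d : ZMod n) ∣ (k : ZMod n) ↔ d ∣ k := by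
  refine ⟨fun hdk => ?_, Nat.cast_dvd_cast⟩
  have := map_dvd (castHom h (ZMod d)) hdk
  rwa [map_natCast, map_natCast, natCast_self, zero_dvd_iff, natCast_eq_zero_iff] at this

variable {p s : ℕ}

theorem isUnit_prime_pow_iff (hp : p.Prime) (hs : 0 < s) (b : ZMod (p ^ s)) :
    IsUnit b ↔ ¬(p : ZMod (p ^ s)) ∣ b := by
  have : NeZero (p ^ s) := ⟨pow_ne_zero s hp.ne_zero⟩
  rw [← natCast_zmod_val b, isUnit_natCast_iff_not_dvd_pow hp hs,
    natCast_dvd_natCast_iff (dvd_pow_self p hs.ne')]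

theorem isLocalRing_prime_pow (hp : p.Prime) (hs : 0 < s) : IsLocalRing (ZMod (p ^ s)) := by
  have : Fact (1 < p ^ s) := ⟨Nat.one_lt_pow hs.ne' hp.one_lt⟩
  refine IsLocalRing.of_nonunits_add fun a b ha hb => ?_
  simp only [mem_nonunits_iff, isUnit_prime_pow_iff hp hs, not_not] at *
  exact dvd_add ha hb

theorem pow_sub_one_dvd_iff_mul_eq_zero (hp : p ≠ 0) (hs : 0 < s) (a : ZMod (p ^ s)) :
    (p : ZMod (p ^ s)) ^ (s - 1) ∣ a ↔ a * p = 0 := by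
  have : NeZero (p ^ s) := ⟨pow_ne_zero s hp⟩
  rw [← natCast_zmod_val a, ← Nat.cast_pow,
    natCast_dvd_natCast_iff (pow_dvd_pow p (s.sub_le 1)), ← Nat.cast_mul, natCast_eq_zero_iff,
    ← Nat.mul_dvd_mul_iff_right (Nat.pos_of_ne_zero hp), pow_sub_one_mul hs.ne']

theorem card_span_prime_pow (hp : p.Prime) (hs : 0 < s) :
    Nat.card (Ideal.span {(p : ZMod (p ^ s))}) = p ^ (s - 1) := by
  classical
  have : NeZero (p ^ s) := ⟨pow_ne_zero s hp.ne_zero⟩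
  have hunits : #(univ.filter (IsUnit : ZMod (p ^ s) → Prop)) = p ^ (s - 1) * (p - 1) := by
    rw [← image_val_units_eq_filter_isUnit, card_image_of_injective _ Units.val_injective,
      card_univ, card_units_eq_totient, Nat.totient_prime_pow hp hs]
  have hspan : Nat.card (Ideal.span {(p : ZMod (p ^ s))}) =
      #(univ.filter fun b : ZMod (p ^ s) => ¬IsUnit b) := by
    rw [Nat.card_eq_fintype_card, Fintype.card_subtype]
    simp [Ideal.mem_span_singleton, isUnit_prime_pow_iff hp hs]
  have htotal := card_filter_add_card_filter_not (s := univ) (IsUnit : ZMod (p ^ s) → Prop)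
  have hps : p ^ s = p ^ (s - 1) * (p - 1) + p ^ (s - 1) := by
    rw [← mul_add_one, Nat.sub_add_cancel hp.one_le, pow_sub_one_mul hs.ne']
  rw [card_univ, ZMod.card, hunits, ← hspan] at htotal
  omega

theorem not_isSquare_neg_one_prime_pow (hp : p.Prime) (h3 : p % 4 = 3) (hs : 0 < s) :
    ¬IsSquare (-1 : ZMod (p ^ s)) := by
  have := Fact.mk hp
  intro h
  have := h.map (castHom (dvd_pow_self p hs.ne') (ZMod p))
  rw [map_neg, map_one] at this
  exact exists_sq_eq_neg_one_iff.mp this h3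

theorem stdAddChar_mul_apply {N : ℕ} [NeZero N] (a b : ZMod N) :
    stdAddChar (a * b) = Complex.exp (2 * Real.pi * Complex.I * a.val * b.val / N) := by
  have : a * b = ((a.val * b.val : ℤ) : ZMod N) := by push_cast; simp
  rw [this, stdAddChar_coe]
  push_cast
  ring_nf

theorem sum_stdAddChar_mul_isUnit (hp : p.Prime) (hs : 0 < s) [NeZero (p ^ s)]
    [DecidablePred (IsUnit : ZMod (p ^ s) → Prop)] (a : ZMod (p ^ s)) :
    ∑ b ∈ univ.filter IsUnit, stdAddChar (a * b) =
      (if a = 0 then (p : ℂ) ^ s else 0) -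
        (if (p : ZMod (p ^ s)) ^ (s - 1) ∣ a then (p : ℂ) ^ (s - 1) else 0) := by
  classical
  set I := Ideal.span {(p : ZMod (p ^ s))}
  have hnonunits : univ.filter (fun b : ZMod (p ^ s) => ¬IsUnit b) = univ.filter (· ∈ I) := by
    ext b
    simp [I, Ideal.mem_span_singleton, isUnit_prime_pow_iff hp hs]
  have hann : (∀ m ∈ I, a * m = 0) ↔ (p : ZMod (p ^ s)) ^ (s - 1) ∣ a := by
    rw [pow_sub_one_dvd_iff_mul_eq_zero hp.ne_zero hs]
    simp only [← smul_eq_mul, ← Submodule.mem_annihilator, I, Ideal.span,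
      Submodule.mem_annihilator_span_singleton]
  rw [eq_sub_iff_add_eq]
  calc ∑ b ∈ univ.filter IsUnit, stdAddChar (a * b) +
        (if (p : ZMod (p ^ s)) ^ (s - 1) ∣ a then (p : ℂ) ^ (s - 1) else 0)
      = ∑ b ∈ univ.filter IsUnit, stdAddChar (a * b) +
          ∑ b ∈ univ.filter (fun b => ¬IsUnit b), stdAddChar (a * b) := by
        rw [hnonunits, AddChar.sum_mul_mem_ideal (isPrimitive_stdAddChar _)]
        simp only [hann, show Nat.card I = p ^ (s - 1) from card_span_prime_pow hp hs,
          Nat.cast_pow]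
    _ = ∑ b, stdAddChar (a * b) := sum_filter_add_sum_filter_not _ _ _
    _ = if a = 0 then (p : ℂ) ^ s else 0 := by
        simp_rw [mul_comm a, AddChar.sum_mulShift a (isPrimitive_stdAddChar _), ZMod.card]
        push_cast
        rfl

end ZMod

/-- Eigenvalues of the quadratic unitary Cayley graph `G_{p^s}` for a prime
`p ≡ 3 (mod 4)`: they are `p^{s-1}(p-1)` at `0`, `-p^{s-1}` at nonzero multiples of
`p^{s-1}`, and `0` elsewhere; in particular they are all integers. -/
theorem stmt_7 (p s : ℕ) (hp : p.Prime) (h3 : p % 4 = 3) (hs : 0 < s) [NeZero (p ^ s)]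
    (chi : ZMod (p ^ s) → ℂ)
    (hchi : ∀ a : ZMod (p ^ s), chi a =
      ∑ b ∈ Finset.univ.image (fun u : (ZMod (p ^ s))ˣ => ((u : ZMod (p ^ s)) ^ 2)),
        Complex.exp (2 * Real.pi * Complex.I * (a.val : ℂ) * (b.val : ℂ) / (p ^ s : ℂ)))
    (lam : ZMod (p ^ s) → ℂ)
    (hlam : ∀ a, lam a = chi a + (starRingEnd ℂ) (chi a)) :
    lam 0 = (p : ℂ) ^ (s - 1) * ((p : ℂ) - 1) ∧
    (∀ a : ZMod (p ^ s), a ≠ 0 → ((p : ZMod (p ^ s)) ^ (s - 1)) ∣ a →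
      lam a = -(p : ℂ) ^ (s - 1)) ∧
    (∀ a : ZMod (p ^ s), ¬ ((p : ZMod (p ^ s)) ^ (s - 1)) ∣ a → lam a = 0) ∧
    (∀ a : ZMod (p ^ s), ∃ z : ℤ, lam a = (z : ℂ)) := by
  classical
  have := ZMod.isLocalRing_prime_pow hp hs
  have h2 : IsUnit (2 : ZMod (p ^ s)) := by
    exact_mod_cast (ZMod.isUnit_natCast_iff_not_dvd_pow hp hs).mpr
      fun h => by have := (Nat.prime_dvd_prime_iff_eq hp Nat.prime_two).mp h; omega
  have hlam_eq : ∀ a, lam a = (if a = 0 then (p : ℂ) ^ s else 0) -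
      (if (p : ZMod (p ^ s)) ^ (s - 1) ∣ a then (p : ℂ) ^ (s - 1) else 0) := by
    intro a
    rw [hlam, hchi, ← ZMod.sum_stdAddChar_mul_isUnit hp hs,
      sum_filter_isUnit_eq_sum_unitSquares h2 (ZMod.not_isSquare_neg_one_prime_pow hp h3 hs),
      map_sum]
    simp only [unitSquares, mul_neg, AddChar.map_neg_eq_conj, ZMod.stdAddChar_mul_apply,
      Nat.cast_pow]
  have hps : (p : ℂ) ^ s = (p : ℂ) ^ (s - 1) * p := (pow_sub_one_mul hs.ne' _).symm
  refine ⟨by simp [hlam_eq, hps]; ring, fun a ha hdvd => by simp [hlam_eq, ha, hdvd],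
    fun a hndvd => ?_, fun a => ?_⟩
  · have ha : a ≠ 0 := by rintro rfl; exact hndvd (dvd_zero _)
    simp [hlam_eq, ha, hndvd]
  · refine ⟨(if a = 0 then (p : ℤ) ^ s else 0) -
      (if (p : ZMod (p ^ s)) ^ (s - 1) ∣ a then (p : ℤ) ^ (s - 1) else 0), ?_⟩
    rw [hlam_eq]
    push_cast
    rfl
end

section
/- Let p be an odd prime, k a positive integer, and a ∈ Z_{p^k} an element that is not a multiple of p^{k-1}. Then the character sum χ_a(Q_{p^k}) = Σ_{b ∈ Q_{p^k}} exp(2πi·ab/p^k) equals 0. -/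
/-!
Since `p` is odd, `2` is a unit of `ZMod (p ^ k)`, and since `p` is nilpotent there, every
`1 + p * t` is the square of a unit. Hence the set `Q` of unit squares is stable under
multiplication by `1 + p * t`, and so `S = ∑_{b ∈ Q} χ(a b)` equals `∑_{b ∈ Q} χ(a b) χ(t p a b)`
for every `t`. Averaging over all `t ∈ ZMod (p ^ k)` kills every term: `p a b ≠ 0` because `b` is
a unit and `p a ≠ 0` (this is where `p ^ (k - 1) ∤ a` enters), so `∑_t χ(t p a b) = 0`.
-/

open Complex Finset

theorem exists_sq_eq_one_add_of_isNilpotent {R : Type*} [CommRing R] [Finite R]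
    (h2 : IsUnit (2 : R)) {x : R} (hx : IsNilpotent x) : ∃ u : Rˣ, (u : R) ^ 2 = 1 + x := by
  -- `y ↦ (1 + y) ^ 2 - 1` is injective on the nilradical (`2 + y + z` is a unit), hence onto.
  let f : nilradical R → nilradical R := fun y =>
    ⟨2 * y + y ^ 2, add_mem (Ideal.mul_mem_left _ _ y.2) (Ideal.pow_mem_of_mem _ y.2 _ two_pos)⟩
  have hf : Function.Injective f := by
    rintro ⟨y, hy⟩ ⟨z, hz⟩ hyz
    have hunit : IsUnit (2 + (y + z)) :=
      (mem_nilradical.1 (add_mem hy hz)).isUnit_add_left_of_commute h2 (Commute.all _ _)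
    have : (2 + (y + z)) * (y - z) = 0 := by
      have := congrArg Subtype.val hyz
      simp only [f] at this
      linear_combination this
    exact Subtype.ext (sub_eq_zero.1 (hunit.mul_right_eq_zero.1 this))
  obtain ⟨⟨y, hy⟩, hyx⟩ := Finite.injective_iff_surjective.1 hf ⟨x, mem_nilradical.2 hx⟩
  refine ⟨(mem_nilradical.1 hy).isUnit_one_add.unit, ?_⟩
  have := congrArg Subtype.val hyx
  simp only [f] at this
  rw [IsUnit.unit_spec, ← this]
  ring

theorem sum_image_sq_units_mul {M β : Type*} [CommMonoid M] [Fintype Mˣ] [DecidableEq M]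
    [AddCommMonoid β] (f : M → β) (w : Mˣ) :
    ∑ b ∈ univ.image (fun u : Mˣ => (u : M) ^ 2), f ((w : M) ^ 2 * b) =
      ∑ b ∈ univ.image (fun u : Mˣ => (u : M) ^ 2), f b := by
  rw [← sum_image (g := ((w : M) ^ 2 * ·)) ((w ^ 2).isUnit.mul_right_injective.injOn), image_image]
  congr 1
  calc univ.image (((w : M) ^ 2 * ·) ∘ fun u : Mˣ => (u : M) ^ 2)
      = (univ.image (w * ·)).image (fun u : Mˣ => (u : M) ^ 2) := by
        rw [image_image]; congr 1; ext u; simp [mul_pow]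
    _ = univ.image (fun u : Mˣ => (u : M) ^ 2) := by
        rw [image_univ_of_surjective (mul_left_surjective w)]

theorem sum_image_sq_units_addChar_mul_eq_zero {R R' : Type*} [CommRing R] [Fintype R]
    [DecidableEq R] [CommRing R'] [IsDomain R'] [CharZero R'] (h2 : IsUnit (2 : R))
    {ψ : AddChar R R'} (hψ : ψ.IsPrimitive) {a c : R} (hc : IsNilpotent c) (hac : a * c ≠ 0) :
    ∑ b ∈ univ.image (fun u : Rˣ => (u : R) ^ 2), ψ (a * b) = 0 := by
  set Q := univ.image (fun u : Rˣ => (u : R) ^ 2)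
  -- every `1 + c * t` is the square of a unit, so multiplication by it permutes `Q`
  have hinv : ∀ t : R, ∑ b ∈ Q, ψ (a * b) = ∑ b ∈ Q, ψ (a * b) * ψ (t * (a * c * b)) := by
    intro t
    obtain ⟨w, hw⟩ :=
      exists_sq_eq_one_add_of_isNilpotent h2 ((Commute.all c t).isNilpotent_mul_right hc)
    rw [← sum_image_sq_units_mul (fun b => ψ (a * b)) w, hw]
    refine sum_congr rfl fun b _ => ?_
    rw [← AddChar.map_add_eq_mul]
    ring_nf
  have hfreq : ∀ b ∈ Q, a * c * b ≠ 0 := by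
    simp only [Q, mem_image, mem_univ, true_and, forall_exists_index, forall_apply_eq_imp_iff]
    intro u
    rw [← Units.val_pow_eq_pow_val]
    exact (Units.mul_left_eq_zero _).not.2 hac
  have : (Fintype.card R : R') * ∑ b ∈ Q, ψ (a * b) = 0 := by
    calc (Fintype.card R : R') * ∑ b ∈ Q, ψ (a * b)
        = ∑ t : R, ∑ b ∈ Q, ψ (a * b) * ψ (t * (a * c * b)) := by
          rw [← sum_congr rfl fun t _ => hinv t, sum_const, card_univ, nsmul_eq_mul]
      _ = ∑ b ∈ Q, ψ (a * b) * ∑ t : R, ψ (t * (a * c * b)) := by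
          rw [sum_comm]; simp only [mul_sum]
      _ = 0 := sum_eq_zero fun b hb => by
          rw [AddChar.sum_mulShift _ hψ, if_neg (hfreq b hb), Nat.cast_zero, mul_zero]
  exact (mul_eq_zero.1 this).resolve_left (Nat.cast_ne_zero.2 Fintype.card_ne_zero)

theorem ZMod.stdAddChar_mul_apply_s9 {N : ℕ} [NeZero N] (a b : ZMod N) :
    ZMod.stdAddChar (a * b) = exp (2 * Real.pi * I * a.val * b.val / N) := by
  have hab : a * b = ((a.val * b.val : ℕ) : ZMod N) := by simp
  rw [hab, ZMod.stdAddChar_apply, ZMod.toCircle_natCast]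
  push_cast
  ring_nf

theorem ZMod.pow_pred_dvd_of_mul_natCast_eq_zero {p k : ℕ} [NeZero (p ^ k)] (hp : 0 < p)
    {a : ZMod (p ^ k)} (h : a * p = 0) : (p : ZMod (p ^ k)) ^ (k - 1) ∣ a := by
  rcases k with _ | k
  · exact one_dvd a
  rw [← ZMod.natCast_zmod_val a, ← Nat.cast_mul, ZMod.natCast_eq_zero_iff] at h
  obtain ⟨c, hc⟩ := Nat.dvd_of_mul_dvd_mul_right hp
    (show p ^ k * p ∣ a.val * p by rwa [← pow_succ])
  exact ⟨c, by rw [← ZMod.natCast_zmod_val a, hc]; push_cast; ring⟩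

theorem stmt_9_general (p k : ℕ) (hodd : Odd p) [NeZero (p ^ k)]
    (a : ZMod (p ^ k)) (ha : ¬ ((p : ZMod (p ^ k)) ^ (k - 1)) ∣ a) :
    (∑ b ∈ Finset.univ.image (fun u : (ZMod (p ^ k))ˣ => ((u : ZMod (p ^ k)) ^ 2)),
        Complex.exp (2 * Real.pi * Complex.I * (a.val : ℂ) * (b.val : ℂ) / (p ^ k : ℂ))) = 0 := by
  have h2 : IsUnit (2 : ZMod (p ^ k)) :=
    (ZMod.isUnit_iff_coprime 2 _).2 (Nat.coprime_two_left.2 hodd.pow)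
  have hp : IsNilpotent (p : ZMod (p ^ k)) := ⟨k, by rw [← Nat.cast_pow, ZMod.natCast_self]⟩
  have hap : a * p ≠ 0 := fun h => ha (ZMod.pow_pred_dvd_of_mul_natCast_eq_zero hodd.pos h)
  simp_rw [← Nat.cast_pow, ← ZMod.stdAddChar_mul_apply_s9]
  exact sum_image_sq_units_addChar_mul_eq_zero h2 (ZMod.isPrimitive_stdAddChar _) hp hap

/-- If `a ∈ Z_{p^k}` is not a multiple of `p^{k-1}`, then `χ_a(Q_{p^k}) = 0`. -/
theorem stmt_9 (p k : ℕ) (hp : p.Prime) (hodd : Odd p) (hk : 0 < k) [NeZero (p ^ k)]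
    (a : ZMod (p ^ k)) (ha : ¬ ((p : ZMod (p ^ k)) ^ (k - 1)) ∣ a) :
    (∑ b ∈ Finset.univ.image (fun u : (ZMod (p ^ k))ˣ => ((u : ZMod (p ^ k)) ^ 2)),
        Complex.exp (2 * Real.pi * Complex.I * (a.val : ℂ) * (b.val : ℂ) / (p ^ k : ℂ))) = 0 :=
  stmt_9_general p k hodd a ha
end

section
/- For k > 2 and a ∈ Z_{2^k} with a ∉ {0, 2^{k-3}, 2^{k-2}, 3·2^{k-3}, 2^{k-1}, 5·2^{k-3}, 3·2^{k-2}, 7·2^{k-3}}, the character sum χ_a(Q_{2^k}) = Σ_{b ∈ Q_{2^k}} exp(2πi·ab/2^k) equals 0. -/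
/-!
Since `8 ∣ 2 ^ k`, squares of odd residues are `1 mod 8`, and conversely Hensel lifting shows that
every residue `≡ 1 mod 8` is a square of a unit; hence `Q_{2^k} = {8t + 1 | t < 2^(k-3)}`.
With `ζ = exp (2πi / 2^k)` the character sum becomes `ζ^a · ∑_{t < 2^(k-3)} (ζ^(8a))^t`,
a full geometric sum over a `2^(k-3)`-th root of unity. It vanishes unless `ζ^(8a) = 1`,
i.e. unless `2^(k-3) ∣ a`, and these multiples are exactly the eight excluded residues.
-/

open Finset Complex

theorem Nat.sq_mod_eight_eq_one_of_odd {n : ℕ} (hn : Odd n) : n ^ 2 % 8 = 1 := by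
  obtain ⟨m, rfl⟩ := hn
  obtain ⟨r, hr⟩ := Nat.even_mul_succ_self m
  have : (2 * m + 1) ^ 2 = 8 * r + 1 := by linear_combination 4 * hr
  omega

theorem Int.exists_sq_modEq_of_modEq_one_eight {x : ℤ} (hx : x ≡ 1 [ZMOD 8]) (k : ℕ) :
    ∃ y : ℤ, y ^ 2 ≡ x [ZMOD 2 ^ k] := by
  suffices lift : ∀ j : ℕ, ∃ y : ℤ, Odd y ∧ (2 ^ (j + 3) : ℤ) ∣ y ^ 2 - x by
    obtain ⟨y, -, hy⟩ := lift k
    exact ⟨y, (Int.modEq_iff_dvd.mpr (dvd_trans (pow_dvd_pow 2 (by omega)) hy)).symm⟩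
  intro j
  induction j with
  | zero => exact ⟨1, odd_one, by simpa using (Int.modEq_iff_dvd.mp hx)⟩
  | succ j ih =>
    obtain ⟨y, ⟨d, rfl⟩, c, hc⟩ := ih
    -- Since `y` is odd, `y + (y ^ 2 - x) / 2` is a square root of `x` modulo the next power of 2.
    refine ⟨2 * d + 1 + 2 ^ (j + 2) * c, ⟨d + 2 ^ (j + 1) * c, by ring⟩,
      c * (d + 1) + 2 ^ j * c ^ 2, ?_⟩
    linear_combination hc

theorem geom_sum_eq_zero_of_pow_eq_one {R : Type*} [Ring R] [NoZeroDivisors R] {x : R} {n : ℕ}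
    (hx : x ≠ 1) (hxn : x ^ n = 1) : ∑ i ∈ range n, x ^ i = 0 := by
  refine (mul_eq_zero.mp ?_).resolve_left (sub_ne_zero.mpr hx.symm)
  rw [mul_neg_geom_sum, hxn, sub_self]

def squaresOfUnits (n : ℕ) [NeZero n] : Finset (ZMod n) :=
  univ.image fun u : (ZMod n)ˣ => (u : ZMod n) ^ 2

theorem mem_squaresOfUnits_two_pow_iff {k : ℕ} (hk : 3 ≤ k) {b : ZMod (2 ^ k)} :
    b ∈ squaresOfUnits (2 ^ k) ↔ b.val % 8 = 1 := by
  have h8 : 8 ∣ 2 ^ k := pow_dvd_pow 2 hk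
  constructor
  · intro hb
    obtain ⟨u, -, rfl⟩ := mem_image.mp hb
    have hodd : Odd (u : ZMod (2 ^ k)).val := Nat.coprime_two_right.mp <|
      (Nat.coprime_pow_right_iff (by omega) _ _).mp (ZMod.val_coe_unit_coprime u)
    rw [sq, ZMod.val_mul, Nat.mod_mod_of_dvd _ h8, ← sq, Nat.sq_mod_eight_eq_one_of_odd hodd]
  · intro hb
    obtain ⟨y, hy⟩ := Int.exists_sq_modEq_of_modEq_one_eight (x := b.val) (by
      rw [Int.ModEq]; omega) k
    have hyb : (y : ZMod (2 ^ k)) ^ 2 = b := by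
      simpa using (ZMod.intCast_eq_intCast_iff _ _ _).mpr hy
    have hb_unit : IsUnit b := by
      rw [← ZMod.natCast_zmod_val b, ZMod.isUnit_iff_coprime]
      exact Nat.Coprime.pow_right _ (Nat.coprime_two_right.mpr (Nat.odd_iff.mpr (by omega)))
    have hy_unit : IsUnit (y : ZMod (2 ^ k)) := (isUnit_pow_iff two_ne_zero).mp (hyb ▸ hb_unit)
    exact mem_image.mpr ⟨hy_unit.unit, mem_univ _, hyb⟩

theorem sum_squaresOfUnits_two_pow {M : Type*} [AddCommMonoid M] {k : ℕ} (hk : 3 ≤ k)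
    (f : ℕ → M) :
    ∑ b ∈ squaresOfUnits (2 ^ k), f b.val = ∑ t ∈ range (2 ^ (k - 3)), f (8 * t + 1) := by
  have h8 : 2 ^ k = 2 ^ (k - 3) * 8 := (pow_sub_mul_pow 2 hk).symm
  have hval : ∀ t < 2 ^ (k - 3), ((8 * t + 1 : ℕ) : ZMod (2 ^ k)).val = 8 * t + 1 :=
    fun t ht => ZMod.val_natCast_of_lt (by omega)
  refine sum_nbij' (fun b => b.val / 8) (fun t => ((8 * t + 1 : ℕ) : ZMod (2 ^ k)))
    ?_ ?_ ?_ ?_ ?_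
  · intro b _
    have := b.val_lt
    rw [mem_range]
    omega
  · intro t ht
    rw [mem_range] at ht
    rw [mem_squaresOfUnits_two_pow_iff hk, hval t ht]
    omega
  · intro b hb
    rw [mem_squaresOfUnits_two_pow_iff hk] at hb
    rw [show 8 * (b.val / 8) + 1 = b.val by omega, ZMod.natCast_zmod_val]
  · intro t ht
    rw [mem_range] at ht
    rw [hval t ht]
    omega
  · intro b hb
    rw [mem_squaresOfUnits_two_pow_iff hk] at hb
    congr 1
    omega

def exceptionalResidues (k : ℕ) : Set (ZMod (2 ^ k)) :=
  {(0 : ZMod (2 ^ k)), ((2 ^ (k - 3) : ℕ) : ZMod (2 ^ k)),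
    ((2 ^ (k - 2) : ℕ) : ZMod (2 ^ k)), ((3 * 2 ^ (k - 3) : ℕ) : ZMod (2 ^ k)),
    ((2 ^ (k - 1) : ℕ) : ZMod (2 ^ k)), ((5 * 2 ^ (k - 3) : ℕ) : ZMod (2 ^ k)),
    ((3 * 2 ^ (k - 2) : ℕ) : ZMod (2 ^ k)), ((7 * 2 ^ (k - 3) : ℕ) : ZMod (2 ^ k))}

theorem mem_exceptionalResidues_of_dvd_val {k : ℕ} (hk : 3 ≤ k) {a : ZMod (2 ^ k)}
    (h : 2 ^ (k - 3) ∣ a.val) : a ∈ exceptionalResidues k := by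
  obtain ⟨m, rfl⟩ : ∃ m, k = m + 3 := ⟨k - 3, by omega⟩
  obtain ⟨j, hj⟩ := h
  rw [Nat.add_sub_cancel] at hj
  have hj8 : j < 8 := by
    have : 2 ^ m * j < 2 ^ m * 8 := by
      calc 2 ^ m * j = a.val := hj.symm
        _ < 2 ^ (m + 3) := a.val_lt
        _ = 2 ^ m * 8 := by ring
    exact Nat.lt_of_mul_lt_mul_left this
  rw [← ZMod.natCast_zmod_val a, hj]
  simp only [exceptionalResidues, show m + 3 - 2 = m + 1 by omega, show m + 3 - 1 = m + 2 by omega,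
    Nat.add_sub_cancel, pow_succ]
  interval_cases j <;> ring_nf <;> simp

/-- For `k > 2` and `a` outside the eight exceptional residues, `χ_a(Q_{2^k}) = 0`. -/
theorem stmt_10 (k : ℕ) (hk : 2 < k) (a : ZMod (2 ^ k))
    (ha : a ∉ ({(0 : ZMod (2 ^ k)), ((2 ^ (k - 3) : ℕ) : ZMod (2 ^ k)),
        ((2 ^ (k - 2) : ℕ) : ZMod (2 ^ k)), ((3 * 2 ^ (k - 3) : ℕ) : ZMod (2 ^ k)),
        ((2 ^ (k - 1) : ℕ) : ZMod (2 ^ k)), ((5 * 2 ^ (k - 3) : ℕ) : ZMod (2 ^ k)),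
        ((3 * 2 ^ (k - 2) : ℕ) : ZMod (2 ^ k)), ((7 * 2 ^ (k - 3) : ℕ) : ZMod (2 ^ k))} :
        Set (ZMod (2 ^ k)))) :
    (∑ b ∈ Finset.univ.image (fun u : (ZMod (2 ^ k))ˣ => ((u : ZMod (2 ^ k)) ^ 2)),
        Complex.exp (2 * Real.pi * Complex.I * (a.val : ℂ) * (b.val : ℂ) / (2 ^ k : ℂ))) = 0 := by
  have h8 : 2 ^ k = 2 ^ (k - 3) * 8 := (pow_sub_mul_pow 2 hk).symm
  set ζ : ℂ := exp (2 * Real.pi * I / (2 ^ k : ℕ))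
  have hζ : IsPrimitiveRoot ζ (2 ^ k) := isPrimitiveRoot_exp _ (by positivity)
  have hexp (n : ℕ) : exp (2 * Real.pi * I * a.val * n / 2 ^ k) = ζ ^ (a.val * n) := by
    rw [← exp_nat_mul]; push_cast; ring_nf
  have hratio_ne_one : ζ ^ (8 * a.val) ≠ 1 := by
    rw [Ne, hζ.pow_eq_one_iff_dvd, mul_comm 8]
    intro hdvd
    refine ha (mem_exceptionalResidues_of_dvd_val hk ?_)
    exact (Nat.mul_dvd_mul_iff_right (by norm_num)).mp ((dvd_of_eq h8.symm).trans hdvd)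
  have hratio_pow : (ζ ^ (8 * a.val)) ^ 2 ^ (k - 3) = 1 := by
    rw [← pow_mul, hζ.pow_eq_one_iff_dvd]
    exact Dvd.intro_left a.val (by linear_combination a.val * h8)
  calc _ = ∑ t ∈ range (2 ^ (k - 3)), ζ ^ (a.val * (8 * t + 1)) := by
        simp only [hexp]
        exact sum_squaresOfUnits_two_pow hk (fun n => ζ ^ (a.val * n))
    _ = ζ ^ a.val * ∑ t ∈ range (2 ^ (k - 3)), (ζ ^ (8 * a.val)) ^ t := by
        rw [mul_sum]; congr! 1 with t; ring
    _ = 0 := by rw [geom_sum_eq_zero_of_pow_eq_one hratio_ne_one hratio_pow, mul_zero]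
end

section
/- Let h > 2 and n = 2^h. The quadratic unitary Cayley graph G_n has an irrational eigenvalue; specifically, the eigenvalue indexed by a = 2^{h-3}, namely χ_a(Q_{2^h}) + conj(χ_a(Q_{2^h})), equals 2^h/(4√2). Consequently G_{2^h} is not integral for h > 2. -/
/-!
Every square of a unit modulo `2^h` is `≡ 1 (mod 8)`, because this already holds in `(ℤ/8)ˣ`.
Hence for `a = 2^(h-3)` every term `exp(2πi·a·b/2^h)` of `χ_a(Q_{2^h})` equals `ζ₈ = exp(πi/4)`,
and `χ_a(Q_{2^h}) = |Q_{2^h}| · ζ₈`. The squares form a subgroup of the kernel of reduction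
`(ℤ/2^h)ˣ → (ℤ/8)ˣ`, which has `2^(h-3)` elements, and they contain the `2^(h-3)` powers of
`25 = 5²` since `5` has order `2^(h-2)`; so `|Q_{2^h}| = 2^(h-3)` and the eigenvalue is
`2^(h-3) · 2 cos(π/4) = 2^(h-3)·√2`.
-/

open Complex

theorem MonoidHom.card_image_univ {G H : Type*} [Group G] [Group H] [Fintype G] [DecidableEq H]
    (f : G →* H) : (Finset.univ.image f).card = Nat.card f.range := by
  rw [← Set.ncard_coe_finset, Finset.coe_image, Finset.coe_univ, Set.image_univ,
    ← MonoidHom.coe_range]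
  rfl

namespace ZMod

theorem sq_eq_one_of_units_eight (u : (ZMod 8)ˣ) : u ^ 2 = 1 := by
  revert u; decide

theorem val_sq_units_mod_eight {N : ℕ} [NeZero N] (h8 : 8 ∣ N) (u : (ZMod N)ˣ) :
    ((u : ZMod N) ^ 2).val % 8 = 1 := by
  have hsq := congrArg Units.val (sq_eq_one_of_units_eight (unitsMap h8 u))
  rw [Units.val_pow_eq_pow_val, unitsMap_def, Units.coe_map, MonoidHom.coe_coe, ← map_pow,
    castHom_apply, cast_eq_val, Units.val_one] at hsq
  have h_val := congrArg val hsq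
  rwa [val_natCast] at h_val

theorem range_powMonoidHom_two_le_ker_unitsMap {N : ℕ} (h8 : 8 ∣ N) :
    (powMonoidHom 2 : (ZMod N)ˣ →* (ZMod N)ˣ).range ≤ (unitsMap h8).ker := by
  rintro _ ⟨u, rfl⟩
  rw [MonoidHom.mem_ker, powMonoidHom_apply, map_pow, sq_eq_one_of_units_eight]

theorem card_ker_unitsMap_mul_totient {m N : ℕ} [NeZero m] [NeZero N] (hm : m ∣ N) :
    Nat.card (unitsMap hm).ker * m.totient = N.totient := by
  have card_units (k : ℕ) [NeZero k] : Nat.card (ZMod k)ˣ = k.totient := by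
    rw [Nat.card_eq_fintype_card, card_units_eq_totient]
  rw [← card_units, ← card_units, ← (unitsMap hm).ker.card_mul_index, Subgroup.index_ker,
    MonoidHom.range_eq_top.mpr (unitsMap_surjective hm), Subgroup.card_top]

theorem card_ker_unitsMap_eight (n : ℕ) :
    Nat.card (unitsMap (pow_dvd_pow 2 (Nat.le_add_left 3 n) : 8 ∣ 2 ^ (n + 3))).ker = 2 ^ n := by
  have := card_ker_unitsMap_mul_totient (pow_dvd_pow 2 (Nat.le_add_left 3 n) : 8 ∣ 2 ^ (n + 3))
  rw [Nat.totient_prime_pow_succ Nat.prime_two, Nat.totient_prime_pow_succ Nat.prime_two] at this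
  generalize Nat.card _ = k at this ⊢
  norm_num [pow_add] at this
  omega

theorem two_pow_le_card_range_powMonoidHom_two (n : ℕ) :
    2 ^ n ≤ Nat.card (powMonoidHom 2 : (ZMod (2 ^ (n + 3)))ˣ →* (ZMod (2 ^ (n + 3)))ˣ).range := by
  let five : (ZMod (2 ^ (n + 3)))ˣ := unitOfCoprime 5 (Nat.Coprime.pow_right _ (by norm_num))
  have h_five : orderOf five = 2 ^ (n + 1) := by
    rw [← orderOf_units]; exact orderOf_five (n + 1)
  calc 2 ^ n = Nat.card (Subgroup.zpowers (five ^ 2)) := by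
        rw [Nat.card_zpowers, orderOf_pow, h_five, pow_succ, Nat.gcd_mul_left_left]; simp
    _ ≤ _ := Subgroup.card_le_of_le (Subgroup.zpowers_le.mpr (MonoidHom.mem_range.mpr ⟨five, rfl⟩))

theorem card_image_sq_units_two_pow (n : ℕ) :
    (Finset.univ.image fun u : (ZMod (2 ^ (n + 3)))ˣ => (u : ZMod (2 ^ (n + 3))) ^ 2).card
      = 2 ^ n := by
  have h_range : Nat.card (powMonoidHom 2 : (ZMod (2 ^ (n + 3)))ˣ →* _).range = 2 ^ n :=
    le_antisymm
      (card_ker_unitsMap_eight n ▸ Subgroup.card_le_of_le (range_powMonoidHom_two_le_ker_unitsMap _))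
      (two_pow_le_card_range_powMonoidHom_two n)
  have h_image : (Finset.univ.image fun u : (ZMod (2 ^ (n + 3)))ˣ => (u : ZMod (2 ^ (n + 3))) ^ 2)
      = (Finset.univ.image (powMonoidHom 2)).image Units.val := by
    rw [Finset.image_image]
    exact Finset.image_congr fun u _ => (Units.val_pow_eq_pow_val u 2).symm
  rw [h_image, Finset.card_image_of_injective _ Units.val_injective, MonoidHom.card_image_univ,
    h_range]

end ZMod

theorem Complex.exp_two_pi_I_mul_two_pow_mul_div_eq (n b : ℕ) (hb : b % 8 = 1) :
    exp (2 * Real.pi * I * 2 ^ n * b / 2 ^ (n + 3)) = exp (Real.pi * I / 4) := by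
  obtain ⟨k, rfl⟩ : ∃ k, b = 8 * k + 1 := ⟨b / 8, by omega⟩
  have h_arg : 2 * Real.pi * I * 2 ^ n * ((8 * k + 1 : ℕ) : ℂ) / 2 ^ (n + 3)
      = k * (2 * Real.pi * I) + Real.pi * I / 4 := by
    field_simp
    push_cast
    ring
  rw [h_arg, exp_add, exp_nat_mul_two_pi_mul_I, one_mul]

theorem Complex.exp_pi_mul_I_div_four_add_conj :
    exp (Real.pi * I / 4) + starRingEnd ℂ (exp (Real.pi * I / 4)) = Real.sqrt 2 := by
  rw [add_conj, show Real.pi * I / 4 = ((Real.pi / 4 : ℝ) : ℂ) * I by push_cast; ring,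
    exp_ofReal_mul_I_re, Real.cos_pi_div_four]
  push_cast
  ring

/-- For `h > 2`, the eigenvalue of `G_{2^h}` indexed by `a = 2^{h-3}` equals
`2^h/(4√2)`, which is irrational; hence `G_{2^h}` is not integral. -/
theorem stmt_12 (h : ℕ) (hh : 2 < h)
    (a : ZMod (2 ^ h)) (ha : a = ((2 ^ (h - 3) : ℕ) : ZMod (2 ^ h)))
    (chi : ℂ)
    (hchi : chi = ∑ b ∈ Finset.univ.image (fun u : (ZMod (2 ^ h))ˣ => ((u : ZMod (2 ^ h)) ^ 2)),
        Complex.exp (2 * Real.pi * Complex.I * (a.val : ℂ) * (b.val : ℂ) / (2 ^ h : ℂ))) :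
    chi + (starRingEnd ℂ) chi = (((2 ^ h : ℝ) / (4 * Real.sqrt 2) : ℝ) : ℂ) ∧
    Irrational ((2 ^ h : ℝ) / (4 * Real.sqrt 2)) := by
  obtain ⟨n, rfl⟩ : ∃ n, h = n + 3 := ⟨h - 3, by omega⟩
  have h_aval : a.val = 2 ^ n := by
    rw [ha, Nat.add_sub_cancel, ZMod.val_cast_of_lt (Nat.pow_lt_pow_right one_lt_two (by omega))]
  have h_chi : chi = (2 ^ n : ℕ) • exp (Real.pi * I / 4) := by
    rw [hchi, Finset.sum_congr rfl fun b hb => ?_, Finset.sum_const,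
      ZMod.card_image_sq_units_two_pow]
    obtain ⟨u, -, rfl⟩ := Finset.mem_image.mp hb
    rw [h_aval, Nat.cast_pow, Nat.cast_ofNat]
    exact exp_two_pi_I_mul_two_pow_mul_div_eq n _
      (ZMod.val_sq_units_mod_eight (pow_dvd_pow 2 (Nat.le_add_left 3 n)) u)
  have h_real : (2 ^ (n + 3) : ℝ) / (4 * Real.sqrt 2) = 2 ^ n * Real.sqrt 2 := by
    have h_sqrt : Real.sqrt 2 ^ 2 = 2 := Real.sq_sqrt zero_le_two
    rw [div_eq_iff (by positivity), pow_add]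
    linear_combination (-4 * (2 : ℝ) ^ n) * h_sqrt
  rw [h_real]
  refine ⟨?_, ?_⟩
  · rw [h_chi, nsmul_eq_mul, map_mul, map_natCast, ← mul_add, exp_pi_mul_I_div_four_add_conj]
    push_cast
    ring
  · exact_mod_cast irrational_sqrt_two.natCast_mul (m := 2 ^ n) (by positivity)
end

section
/- Let p be a prime with p ≡ 1 (mod 4) and n = 2p. Define λ_0 = (p-1)/2, and for nonzero even r let λ_r ∈ {(−1+√p)/2, (−1−√p)/2}, for odd r ≠ p let λ_r ∈ {(1−√p)/2, (1+√p)/2}, and λ_p = (1−p)/2 (these are the eigenvalues of G_{2p}). If integers ℓ_1, ..., ℓ_{n-1} satisfy Σ_{r=1}^{n-1} ℓ_r (λ_r − λ_0) = 0, then p divides Σ_{r odd} ℓ_r; in particular Σ_{r odd} ℓ_r ≠ ±1. -/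
/-!
Twice `λ_r - λ_0` lies in `2·[r odd] + pℤ + ℤ√p` for every `1 ≤ r < 2p`. Since `1` and `√p` are
linearly independent over `ℚ`, the rational part of `2 Σ ℓ_r (λ_r - λ_0) = 0` vanishes, which gives
`p ∣ 2 Σ_{r odd} ℓ_r`; as `p` is odd, `p ∣ Σ_{r odd} ℓ_r`.
-/

open Finset

theorem Irrational.intCast_add_intCast_mul_eq_zero_iff {x : ℝ} (hx : Irrational x) {a b : ℤ} :
    (a : ℝ) + b * x = 0 ↔ a = 0 ∧ b = 0 := by
  refine ⟨fun h => ?_, fun ⟨ha, hb⟩ => by simp [ha, hb]⟩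
  have hb : b = 0 := by
    by_contra hb
    refine hx.ne_rational (-a) b ?_
    have : (b : ℝ) ≠ 0 := mod_cast hb
    field_simp
    push_cast
    linarith
  subst hb
  simpa using h

theorem Irrational.dvd_sum_mul_of_sum_mul_eq_zero {ι : Type*} {x : ℝ} (hx : Irrational x)
    {s : Finset ι} {p : ℤ} {ℓ c : ι → ℤ} {f : ι → ℝ}
    (hf : ∀ i ∈ s, ∃ m e : ℤ, f i = c i + p * m + e * x)
    (hsum : ∑ i ∈ s, ℓ i * f i = 0) :
    p ∣ ∑ i ∈ s, ℓ i * c i := by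
  choose! m e hme using hf
  have hsplit : ((∑ i ∈ s, ℓ i * (c i + p * m i) : ℤ) : ℝ) + (∑ i ∈ s, ℓ i * e i : ℤ) * x = 0 := by
    rw [← hsum]
    push_cast
    rw [sum_mul, ← sum_add_distrib]
    refine sum_congr rfl fun i hi => ?_
    rw [hme i hi]
    ring
  have hrat := (hx.intCast_add_intCast_mul_eq_zero_iff.mp hsplit).1
  have hpm : ∑ i ∈ s, ℓ i * (p * m i) = p * ∑ i ∈ s, ℓ i * m i := by
    rw [mul_sum]
    exact sum_congr rfl fun i _ => mul_left_comm _ _ _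
  simp only [mul_add, sum_add_distrib, hpm] at hrat
  exact ⟨-∑ i ∈ s, ℓ i * m i, by linarith⟩

theorem exists_two_mul_eigenvalue_sub_eq (p : ℕ) (hodd : p % 2 = 1) (n : ℕ) (lam : ℕ → ℝ)
    (h0 : lam 0 = ((p : ℝ) - 1) / 2)
    (hpp : lam p = (1 - (p : ℝ)) / 2)
    (heven : ∀ r, 0 < r → r < n → r % 2 = 0 →
      lam r = (-1 + Real.sqrt p) / 2 ∨ lam r = (-1 - Real.sqrt p) / 2)
    (hoddr : ∀ r, r < n → r % 2 = 1 → r ≠ p →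
      lam r = (1 - Real.sqrt p) / 2 ∨ lam r = (1 + Real.sqrt p) / 2)
    {r : ℕ} (hr : r ∈ Ico 1 n) :
    ∃ m e : ℤ, 2 * (lam r - lam 0) =
      ((if r % 2 = 1 then 2 else 0 : ℤ) : ℝ) + (p : ℤ) * m + e * Real.sqrt p := by
  rw [mem_Ico] at hr
  rw [h0]
  by_cases hrp : r = p
  · subst hrp
    exact ⟨-2, 0, by rw [hpp, if_pos hodd]; push_cast; ring⟩
  rcases Nat.mod_two_eq_zero_or_one r with hr2 | hr2
  · rw [if_neg (by omega)]
    rcases heven r (by omega) hr.2 hr2 with h | h <;> rw [h]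
    exacts [⟨-1, 1, by push_cast; ring⟩, ⟨-1, -1, by push_cast; ring⟩]
  · rw [if_pos hr2]
    rcases hoddr r hr.2 hr2 hrp with h | h <;> rw [h]
    exacts [⟨-1, -1, by push_cast; ring⟩, ⟨-1, 1, by push_cast; ring⟩]

theorem stmt_15_general (p : ℕ) (hp : p.Prime) (h1 : p % 4 = 1) (n : ℕ)
    (lam : ℕ → ℝ)
    (h0 : lam 0 = ((p : ℝ) - 1) / 2)
    (hpp : lam p = (1 - (p : ℝ)) / 2)
    (heven : ∀ r, 0 < r → r < n → r % 2 = 0 →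
      lam r = (-1 + Real.sqrt p) / 2 ∨ lam r = (-1 - Real.sqrt p) / 2)
    (hoddr : ∀ r, r < n → r % 2 = 1 → r ≠ p →
      lam r = (1 - Real.sqrt p) / 2 ∨ lam r = (1 + Real.sqrt p) / 2)
    (ℓ : ℕ → ℤ)
    (hsum : ∑ r ∈ Finset.Ico 1 n, (ℓ r : ℝ) * (lam r - lam 0) = 0) :
    (p : ℤ) ∣ (∑ r ∈ (Finset.Ico 1 n).filter (fun r => r % 2 = 1), ℓ r) ∧
    (∑ r ∈ (Finset.Ico 1 n).filter (fun r => r % 2 = 1), ℓ r) ≠ 1 ∧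
    (∑ r ∈ (Finset.Ico 1 n).filter (fun r => r % 2 = 1), ℓ r) ≠ -1 := by
  have hodd : p % 2 = 1 := by omega
  set S := ∑ r ∈ (Ico 1 n).filter (fun r => r % 2 = 1), ℓ r
  have htwice : ∑ r ∈ Ico 1 n, (ℓ r : ℝ) * (2 * (lam r - lam 0)) = 0 := by
    simp only [mul_left_comm _ (2 : ℝ), ← mul_sum, hsum, mul_zero]
  have hdvd2S : (p : ℤ) ∣ S * 2 := by
    have h := hp.irrational_sqrt.dvd_sum_mul_of_sum_mul_eq_zero
      (fun r hr => exists_two_mul_eigenvalue_sub_eq p hodd n lam h0 hpp heven hoddr hr) htwice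
    have hodd_part : ∑ r ∈ Ico 1 n, ℓ r * (if r % 2 = 1 then 2 else 0) = S * 2 := by
      rw [sum_mul, sum_filter]
      exact sum_congr rfl fun r _ => by split_ifs <;> ring
    rwa [hodd_part] at h
  have hdvdS : (p : ℤ) ∣ S :=
    (Nat.coprime_two_right.mpr (Nat.odd_iff.mpr hodd)).isCoprime.dvd_of_dvd_mul_right hdvd2S
  have hprime : Prime (p : ℤ) := Nat.prime_iff_prime_int.mp hp
  refine ⟨hdvdS, fun hS => hprime.not_dvd_one (hS ▸ hdvdS), fun hS => ?_⟩
  exact hprime.not_dvd_one (dvd_neg.mp (hS ▸ hdvdS))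

/-- For `p ≡ 1 (mod 4)` prime and `n = 2p`, with the eigenvalues of `G_{2p}` as listed,
any integers `ℓ_1, ..., ℓ_{n-1}` with `Σ ℓ_r (λ_r - λ_0) = 0` satisfy
`p ∣ Σ_{r odd} ℓ_r`; in particular this sum is not `±1`. -/
theorem stmt_15 (p : ℕ) (hp : p.Prime) (h1 : p % 4 = 1) (n : ℕ) (hn : n = 2 * p)
    (lam : ℕ → ℝ)
    (h0 : lam 0 = ((p : ℝ) - 1) / 2)
    (hpp : lam p = (1 - (p : ℝ)) / 2)
    (heven : ∀ r, 0 < r → r < n → r % 2 = 0 →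
      lam r = (-1 + Real.sqrt p) / 2 ∨ lam r = (-1 - Real.sqrt p) / 2)
    (hoddr : ∀ r, r < n → r % 2 = 1 → r ≠ p →
      lam r = (1 - Real.sqrt p) / 2 ∨ lam r = (1 + Real.sqrt p) / 2)
    (ℓ : ℕ → ℤ)
    (hsum : ∑ r ∈ Finset.Ico 1 n, (ℓ r : ℝ) * (lam r - lam 0) = 0) :
    (p : ℤ) ∣ (∑ r ∈ (Finset.Ico 1 n).filter (fun r => r % 2 = 1), ℓ r) ∧
    (∑ r ∈ (Finset.Ico 1 n).filter (fun r => r % 2 = 1), ℓ r) ≠ 1 ∧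
    (∑ r ∈ (Finset.Ico 1 n).filter (fun r => r % 2 = 1), ℓ r) ≠ -1 :=
  stmt_15_general p hp h1 n lam h0 hpp heven hoddr ℓ hsum
end
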